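/- Let F : {0,1}^N → {0,1}^N be the map sending an initial state s(0) of the simple counter of dimension N to the state s(N) obtained after N time steps (starting at time 0, so mode(0) = switch). Then F has a periodic orbit of length at least 2^N; in particular the 2^N states F^k(0,...,0) for k = 0, 1, ..., 2^N − 1 are pairwise distinct. -/

import Mathlib

/-- The two modes of the counter. -/
inductive Mode : Type
  | rotate : Mode
  | switch : Mode
deriving DecidableEq

/-- A trajectory `s` (with mode sequence `mode`) of the simple counter of
dimension `N`, started at time `0` (so that `mode 0 = switch`).
Coordinates are `0`-indexed: coordinate `i` corresponds to `s_{i+1}`. -/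
def SimpleCounterTraj {N : ℕ} (hN : 0 < N)
    (s : ℕ → Fin N → Bool) (mode : ℕ → Mode) : Prop :=
  (∀ (t : ℕ) (i : Fin N) (h : (i : ℕ) + 1 < N),
      s (t + 1) i = s t ⟨(i : ℕ) + 1, h⟩) ∧
  (∀ t : ℕ, s (t + 1) ⟨N - 1, Nat.sub_lt hN one_pos⟩ =
      (if mode t = Mode.switch then !(s t ⟨0, hN⟩) else s t ⟨0, hN⟩)) ∧
  (∀ t : ℕ, N ∣ t → mode t = Mode.switch) ∧
  (∀ t : ℕ, ¬ N ∣ (t + 1) →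
      mode (t + 1) = (if s t ⟨0, hN⟩ = true then mode t else Mode.rotate))

/-!
Over one block of `N` steps the register rotates once through itself, and the cell that
re-enters at the end is flipped exactly while the mode is `switch`, i.e. while every bit read so
far in the block was `1`. That is the carry of a binary increment with least significant bit
first, so `F` adds one modulo `2 ^ N` to the number whose binary digits are the state; it is
therefore a cyclic permutation of all `2 ^ N` states.
-/

open Function

section BinaryIncrement

variable {n : ℕ}

def binaryIncrement (x : Fin n → Bool) : Fin n → Bool :=
  fun i => x i ^^ decide (∀ j < i, x j = true)

def bitsValue (x : Fin n → Bool) : ℕ :=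
  ∑ i, (x i).toNat * 2 ^ (i : ℕ)

lemma bitsValue_eq_finFunctionFinEquiv (x : Fin n → Bool) :
    bitsValue x = finFunctionFinEquiv (fun i => finTwoEquiv.symm (x i)) := by
  rw [finFunctionFinEquiv_apply]
  refine Finset.sum_congr rfl fun i _ => ?_
  cases x i <;> rfl

lemma bitsValue_injective : Injective (bitsValue (n := n)) := fun x y h => by
  simp only [bitsValue_eq_finFunctionFinEquiv] at h
  funext i
  simpa using congrFun (finFunctionFinEquiv.injective (Fin.val_injective h)) i

lemma bitsValue_lt (x : Fin n → Bool) : bitsValue x < 2 ^ n := by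
  rw [bitsValue_eq_finFunctionFinEquiv]
  exact Fin.isLt _

lemma bitsValue_succ (x : Fin (n + 1) → Bool) :
    bitsValue x = (x 0).toNat + 2 * bitsValue (Fin.tail x) := by
  simp only [bitsValue, Fin.sum_univ_succ, Fin.val_zero, pow_zero, mul_one, Fin.val_succ,
    pow_succ, Finset.mul_sum, Fin.tail]
  congr 1
  exact Finset.sum_congr rfl fun i _ => by ring

lemma binaryIncrement_zero (x : Fin (n + 1) → Bool) : binaryIncrement x 0 = !x 0 := by
  simp [binaryIncrement]

lemma tail_binaryIncrement (x : Fin (n + 1) → Bool) :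
    Fin.tail (binaryIncrement x) = if x 0 then binaryIncrement (Fin.tail x) else Fin.tail x := by
  funext i
  have hcarry : (∀ j < i.succ, x j = true) ↔ x 0 = true ∧ ∀ j < i, x j.succ = true := by
    simp [Fin.forall_fin_succ, Fin.succ_pos]
  simp only [Fin.tail, binaryIncrement, decide_eq_decide.2 hcarry]
  cases x 0 <;> simp <;> rfl

lemma bitsValue_binaryIncrement (x : Fin n → Bool) :
    bitsValue (binaryIncrement x) = (bitsValue x + 1) % 2 ^ n := by
  induction n with
  | zero => simp [bitsValue]
  | succ n ih =>
    rw [bitsValue_succ, bitsValue_succ x, binaryIncrement_zero, tail_binaryIncrement, pow_succ]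
    cases x 0
    · simp only [Bool.false_eq_true, if_false, Bool.not_false, Bool.toNat_true,
        Bool.toNat_false]
      rw [Nat.mod_eq_of_lt (by have := bitsValue_lt (Fin.tail x); omega)]
      ring
    · simp only [ih, if_true, Bool.not_true, Bool.toNat_false, Bool.toNat_true, zero_add]
      rw [show 1 + 2 * bitsValue (Fin.tail x) + 1 = 2 * (bitsValue (Fin.tail x) + 1) by ring,
        mul_comm (2 ^ n), Nat.mul_mod_mul_left]

lemma bitsValue_iterate_binaryIncrement (k : ℕ) (x : Fin n → Bool) :
    bitsValue (binaryIncrement^[k] x) = (bitsValue x + k) % 2 ^ n := by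
  induction k with
  | zero => exact (Nat.mod_eq_of_lt (bitsValue_lt x)).symm
  | succ k ih => rw [iterate_succ_apply', bitsValue_binaryIncrement, ih, Nat.mod_add_mod, add_assoc]

lemma isPeriodicPt_binaryIncrement_iff {k : ℕ} {x : Fin n → Bool} :
    IsPeriodicPt binaryIncrement k x ↔ 2 ^ n ∣ k := by
  have hx : bitsValue x % 2 ^ n = bitsValue x := Nat.mod_eq_of_lt (bitsValue_lt x)
  rw [IsPeriodicPt, IsFixedPt, ← bitsValue_injective.eq_iff, bitsValue_iterate_binaryIncrement,
    ← Nat.modEq_zero_iff_dvd]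
  conv_lhs => rhs; rw [← hx, ← add_zero (bitsValue x)]
  exact ⟨Nat.ModEq.add_left_cancel' _, Nat.ModEq.add_left _⟩

lemma minimalPeriod_binaryIncrement (x : Fin n → Bool) :
    minimalPeriod binaryIncrement x = 2 ^ n :=
  Nat.dvd_antisymm
    (isPeriodicPt_iff_minimalPeriod_dvd.1 (isPeriodicPt_binaryIncrement_iff.2 dvd_rfl))
    (isPeriodicPt_binaryIncrement_iff.1 (isPeriodicPt_minimalPeriod _ _))

end BinaryIncrement

section SimpleCounter

variable {N : ℕ} (hN : 0 < N) (x : Fin N → Bool)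

/-- The trajectory of the counter from `x` is a window of width `N` sliding along this tape:
position `q * N + r` holds bit `r` of the `q`-th binary successor of `x`. -/
def counterTape (p : ℕ) : Bool :=
  (binaryIncrement^[p / N] x) ⟨p % N, Nat.mod_lt p hN⟩

/-- The pending carry of the increment in progress at time `t`. -/
def counterMode (t : ℕ) : Mode :=
  if ∀ j : Fin N, (j : ℕ) < t % N → (binaryIncrement^[t / N] x) j = true then .switch
  else .rotate

lemma counterMode_eq_switch_iff (t : ℕ) :
    counterMode x t = .switch ↔
      ∀ j : Fin N, (j : ℕ) < t % N → (binaryIncrement^[t / N] x) j = true := by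
  unfold counterMode
  split_ifs with h <;> simpa using h

lemma counterTape_add_dim (t : ℕ) :
    counterTape hN x (t + N) =
      (counterTape hN x t ^^ decide (counterMode x t = .switch)) := by
  simp only [counterTape, counterMode_eq_switch_iff, Nat.add_div_right t hN, Nat.add_mod_right,
    iterate_succ_apply']
  rfl

lemma counterMode_succ {t : ℕ} (ht : ¬ N ∣ t + 1) :
    counterMode x (t + 1) =
      if counterTape hN x t = true then counterMode x t else .rotate := by
  have hdiv : (t + 1) / N = t / N := Nat.succ_div_of_not_dvd ht
  have hmod : (t + 1) % N = t % N + 1 := by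
    have := Nat.div_add_mod t N
    have := Nat.div_add_mod (t + 1) N
    rw [hdiv] at this
    omega
  have hcarry (b : Fin N → Bool) :
      (∀ j : Fin N, (j : ℕ) < t % N + 1 → b j = true) ↔
        (∀ j : Fin N, (j : ℕ) < t % N → b j = true) ∧
          b ⟨t % N, Nat.mod_lt t hN⟩ = true := by
    refine ⟨fun h => ⟨fun j hj => h j (by omega), h _ (by simp)⟩,
      fun ⟨h, hlast⟩ j hj => ?_⟩
    rcases Nat.lt_succ_iff_lt_or_eq.1 hj with hj | hj
    · exact h j hj
    · obtain rfl : j = ⟨t % N, Nat.mod_lt t hN⟩ := Fin.ext hj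
      exact hlast
  simp only [counterMode, counterTape, hdiv, hmod, hcarry]
  by_cases hbit : (binaryIncrement^[t / N] x) ⟨t % N, Nat.mod_lt t hN⟩ = true <;>
    simp [hbit]

theorem simpleCounterTraj_counterTape :
    SimpleCounterTraj hN (fun t i => counterTape hN x (t + i)) (counterMode x) := by
  refine ⟨fun t i h => ?_, fun t => ?_, fun t ht => ?_, fun t ht => ?_⟩
  · simp only [add_right_comm t 1, add_assoc]
  · dsimp only
    rw [show t + 1 + (N - 1) = t + N by omega, counterTape_add_dim]
    split_ifs with h <;> simp [h]
  · simp [counterMode, Nat.mod_eq_zero_of_dvd ht]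
  · simpa using counterMode_succ hN x ht

theorem eq_binaryIncrement_of_simpleCounterTraj {F : (Fin N → Bool) → Fin N → Bool}
    (hF : ∀ s mode, SimpleCounterTraj hN s mode → F (s 0) = s N) :
    F = binaryIncrement := by
  funext x
  have := hF _ _ (simpleCounterTraj_counterTape hN x)
  have h_start : (fun i : Fin N => counterTape hN x i) = x := by
    funext i
    simp [counterTape, Nat.div_eq_of_lt i.isLt, Nat.mod_eq_of_lt i.isLt]
  have h_end : (fun i : Fin N => counterTape hN x (N + i)) = binaryIncrement x := by
    funext i
    simp [counterTape, add_comm N, Nat.add_div_right _ hN, Nat.div_eq_of_lt i.isLt,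
      Nat.mod_eq_of_lt i.isLt]
  simpa only [zero_add, h_start, h_end] using this

end SimpleCounter

/-- If `F` maps each initial state `s(0)` of the simple counter of dimension `N`
to the state `s(N)` obtained after `N` steps, then `F` has a periodic orbit of
length at least `2^N`; in particular the states `F^[k] (0,…,0)` for
`k = 0, …, 2^N - 1` are pairwise distinct. -/
theorem stmt2 (N : ℕ) (hN : 0 < N)
    (F : (Fin N → Bool) → (Fin N → Bool))
    (hF : ∀ (s : ℕ → Fin N → Bool) (mode : ℕ → Mode),
      SimpleCounterTraj hN s mode → F (s 0) = s N) :
    (∃ (x : Fin N → Bool) (p : ℕ),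
      2 ^ N ≤ p ∧ F^[p] x = x ∧ ∀ k : ℕ, 0 < k → k < p → F^[k] x ≠ x) ∧
    (∀ k₁ k₂ : ℕ, k₁ < 2 ^ N → k₂ < 2 ^ N →
      F^[k₁] (fun _ => false) = F^[k₂] (fun _ => false) → k₁ = k₂) := by
  obtain rfl := eq_binaryIncrement_of_simpleCounterTraj hN hF
  have hperiod := minimalPeriod_binaryIncrement (fun _ : Fin N => false)
  refine ⟨⟨_, _, hperiod.ge, iterate_minimalPeriod, fun k hk hkp =>
    not_isPeriodicPt_of_pos_of_lt_minimalPeriod hk.ne' hkp⟩, ?_⟩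
  rw [← hperiod]
  exact fun k₁ k₂ h₁ h₂ => iterate_injOn_Iio_minimalPeriod h₁ h₂
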